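/- Let n ≥ 2 and let Ω ⊊ ℝⁿ be a nonempty open set whose boundary ∂Ω is unbounded and lower Ahlfors regular, i.e., there is c > 0 with ℋ^{n−1}(∂Ω ∩ B(x,r)) ≥ c·r^{n−1} for all x ∈ ∂Ω and r ∈ (0,∞); set σ := ℋ^{n−1} restricted to ∂Ω. Fix κ ∈ (0,∞) and q ∈ [1,∞). Then there exists a constant C ∈ (0,∞), depending only on n, c, κ, q, such that for every continuous function u : Ω → ℝ and every x ∈ Ω one has |u(x)| ≤ C · dist(x,∂Ω)^{−(n−1)/q} · ‖N_κ u‖_{L^q(∂Ω,σ)}. -/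

import Mathlib

open MeasureTheory Metric Set Filter
open scoped ENNReal NNReal Topology

noncomputable section

abbrev Euc (n : ℕ) : Type := EuclideanSpace ℝ (Fin n)

variable {n : ℕ}

/-- The nontangential approach region `Γ_κ(x)` to `∂Ω` from within `Ω`. -/
def ntRegion (Ω : Set (Euc n)) (κ : ℝ) (x : Euc n) : Set (Euc n) :=
  {y | y ∈ Ω ∧ dist x y < (1 + κ) * infDist y (frontier Ω)}

/-- The one-sided collar neighborhood `O_ε` of `∂Ω`. -/
def collar (Ω : Set (Euc n)) (ε : ℝ) : Set (Euc n) :=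
  {y | y ∈ Ω ∧ infDist y (frontier Ω) < ε}

/-- Nontangential maximal function of `u` restricted to a set `S` (truncated version). -/
def ntMaxOn {E : Type*} [NormedAddCommGroup E] (Ω S : Set (Euc n)) (κ : ℝ)
    (u : Euc n → E) (x : Euc n) : ℝ≥0∞ :=
  essSup (fun y => (‖u y‖₊ : ℝ≥0∞)) (volume.restrict (ntRegion Ω κ x ∩ S))

/-- Nontangential maximal function `N_κ u`. -/
def ntMax {E : Type*} [NormedAddCommGroup E] (Ω : Set (Euc n)) (κ : ℝ)
    (u : Euc n → E) (x : Euc n) : ℝ≥0∞ :=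
  essSup (fun y => (‖u y‖₊ : ℝ≥0∞)) (volume.restrict (ntRegion Ω κ x))

/-- `u` has κ-nontangential trace `v` at the boundary point `x`. -/
def HasNTTrace {E : Type*} [NormedAddCommGroup E] (Ω : Set (Euc n)) (κ : ℝ)
    (u : Euc n → E) (x : Euc n) (v : E) : Prop :=
  x ∈ closure (ntRegion Ω κ x) ∧
  ∃ N : Set (Euc n), N ⊆ ntRegion Ω κ x ∧ volume N = 0 ∧
    Tendsto u (nhdsWithin x (ntRegion Ω κ x \ N)) (nhds v)

/-- `Sig` is an Ahlfors regular set (of dimension `n-1`) with constant `C`. -/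
def AhlforsRegularWith (n : ℕ) (Sig : Set (Euc n)) (C : ℝ) : Prop :=
  1 < C ∧ IsClosed Sig ∧ ∀ x ∈ Sig, ∀ r : ℝ, 0 < r →
    ENNReal.ofReal r < 2 * EMetric.diam Sig →
    ENNReal.ofReal (C⁻¹ * r ^ (n - 1)) ≤ μH[(n : ℝ) - 1] (Sig ∩ ball x r) ∧
      μH[(n : ℝ) - 1] (Sig ∩ ball x r) ≤ ENNReal.ofReal (C * r ^ (n - 1))

/-- The measure-theoretic (geometric measure theoretic) boundary `∂*Ω`. -/
def mtBoundary (n : ℕ) (Ω : Set (Euc n)) : Set (Euc n) :=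
  {x | 0 < limsup (fun r : ℝ => volume (Ω ∩ ball x r) / ENNReal.ofReal (r ^ n)) (𝓝[>] 0) ∧
       0 < limsup (fun r : ℝ => volume (Ωᶜ ∩ ball x r) / ENNReal.ofReal (r ^ n)) (𝓝[>] 0)}

/-- The nontangentially accessible boundary `∂_nta Ω`. -/
def ntaBoundary (n : ℕ) (Ω : Set (Euc n)) : Set (Euc n) :=
  {x | x ∈ frontier Ω ∧ ∀ κ : ℝ, 0 < κ → x ∈ closure (ntRegion Ω κ x)}

/-- The Laplacian `Δu = ∑ ∂²u/∂x_j²`, via iterated Fréchet derivatives. -/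
def laplacian (u : Euc n → ℝ) (x : Euc n) : ℝ :=
  ∑ i : Fin n, fderiv ℝ (fun z => fderiv ℝ u z (EuclideanSpace.single i 1)) x
    (EuclideanSpace.single i 1)

/-- `u` is harmonic on the open set `Ω`. -/
def HarmonicOn' (u : Euc n → ℝ) (Ω : Set (Euc n)) : Prop :=
  ContDiffOn ℝ 2 u Ω ∧ ∀ x ∈ Ω, laplacian u x = 0

/-- `w` is (continuous and) subharmonic on the open set `Ω`, via the sub-mean value property. -/
def SubharmonicOn (w : Euc n → ℝ) (Ω : Set (Euc n)) : Prop :=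
  ContinuousOn w Ω ∧ ∀ x ∈ Ω, ∀ r : ℝ, 0 < r → closedBall x r ⊆ Ω →
    w x ≤ ⨍ y in ball x r, w y

/-- `Sig` is a uniformly rectifiable (UR) set: closed, Ahlfors regular, with
Big Pieces of Lipschitz Images. -/
def IsURSet (n : ℕ) (Sig : Set (Euc n)) : Prop :=
  IsClosed Sig ∧ (∃ C : ℝ, AhlforsRegularWith n Sig C) ∧
  ∃ ε : ℝ, 0 < ε ∧ ∃ M₀ : ℝ≥0, ∀ x ∈ Sig, ∀ r : ℝ, 0 < r →
    ENNReal.ofReal r < EMetric.diam Sig →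
    ∃ Φ : EuclideanSpace ℝ (Fin (n - 1)) → Euc n, LipschitzWith M₀ Φ ∧
      ENNReal.ofReal (ε * r ^ (n - 1)) ≤
        μH[(n : ℝ) - 1] (Sig ∩ ball x r ∩ Φ '' ball (0 : EuclideanSpace ℝ (Fin (n - 1))) r)

end

/-!
Let `δ = dist(x, ∂Ω)` be attained at `w ∈ ∂Ω`. Every boundary point `z` with
`|z - w| < κ δ` sees `x` inside its approach cone, since `|z - x| < κ δ + δ`; as the cone
is open and `u` is continuous at `x`, this gives `|u x| ≤ N_κ u (z)`. Integrating over
`∂Ω ∩ B(w, κ δ)`, whose measure is at least `c (κ δ)^(n-1)` by lower Ahlfors regularity,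
yields `|u x|^q · c (κ δ)^(n-1) ≤ ‖N_κ u‖_q^q`.
-/

theorem ContinuousAt.le_essSup_restrict {X : Type*} [TopologicalSpace X] [MeasurableSpace X]
    [OpensMeasurableSpace X] {μ : Measure X} [μ.IsOpenPosMeasure] {f : X → ℝ≥0∞}
    {U : Set X} {x : X}
    (hf : ContinuousAt f x) (hU : IsOpen U) (hx : x ∈ U) :
    f x ≤ essSup f (μ.restrict U) := by
  by_contra! h
  have hdense : Dense {y | y ∈ U → f y ≤ essSup f (μ.restrict U)} :=
    Measure.dense_of_ae (μ := μ) ((ae_restrict_iff' hU.measurableSet).1 (ENNReal.ae_le_essSup f))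
  obtain ⟨y, ⟨hlt, hyU⟩, hle⟩ := mem_closure_iff_nhds.1 (hdense x) _
    (inter_mem (hf (Ioi_mem_nhds h)) (hU.mem_nhds hx))
  exact (hle hyU).not_gt hlt

theorem le_rpow_neg_mul_rpow_of_rpow_mul_le {a m I : ℝ≥0∞} {q : ℝ} (hq : 0 < q)
    (hm₀ : m ≠ 0) (hm : m ≠ ⊤) (h : a ^ q * m ≤ I) :
    a ≤ m ^ (-(1 / q)) * I ^ (1 / q) := by
  have haq : a ^ q ≤ m⁻¹ * I := by
    rwa [← ENNReal.div_eq_inv_mul, ENNReal.le_div_iff_mul_le (.inl hm₀) (.inl hm)]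
  calc a = (a ^ q) ^ (1 / q) := by
        rw [← ENNReal.rpow_mul, mul_one_div_cancel hq.ne', ENNReal.rpow_one]
    _ ≤ (m⁻¹ * I) ^ (1 / q) := ENNReal.rpow_le_rpow haq (by positivity)
    _ = m ^ (-(1 / q)) * I ^ (1 / q) := by
      rw [ENNReal.mul_rpow_of_nonneg _ _ (by positivity), ENNReal.inv_rpow, ← ENNReal.rpow_neg]

section NontangentialMaximal

variable {n : ℕ} {Ω : Set (Euc n)} {κ : ℝ}

theorem isOpen_ntRegion (hΩ : IsOpen Ω) (x : Euc n) : IsOpen (ntRegion Ω κ x) :=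
  hΩ.inter (isOpen_lt (continuous_const.dist continuous_id)
    (continuous_const.mul (continuous_infDist_pt _)))

theorem mem_ntRegion_of_mem_ball {x w z : Euc n} (hx : x ∈ Ω)
    (hxw : infDist x (frontier Ω) = dist x w)
    (hz : z ∈ ball w (κ * infDist x (frontier Ω))) : x ∈ ntRegion Ω κ z := by
  refine ⟨hx, ?_⟩
  calc dist z x ≤ dist z w + dist w x := dist_triangle z w x
    _ < κ * infDist x (frontier Ω) + infDist x (frontier Ω) := by
      rw [dist_comm w x, ← hxw]; exact add_lt_add_left (mem_ball.1 hz) _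
    _ = (1 + κ) * infDist x (frontier Ω) := by ring

theorem nnnorm_le_ntMax {E : Type*} [NormedAddCommGroup E] {u : Euc n → E} {x z : Euc n}
    (hΩ : IsOpen Ω) (hu : ContinuousOn u Ω) (hx : x ∈ ntRegion Ω κ z) :
    (‖u x‖₊ : ℝ≥0∞) ≤ ntMax Ω κ u z :=
  (ENNReal.continuous_coe.continuousAt.comp (hu.continuousAt (hΩ.mem_nhds hx.1)).nnnorm
    ).le_essSup_restrict (isOpen_ntRegion hΩ z) hx

theorem rpow_mul_measure_le_lintegral_ntMax {E : Type*} [NormedAddCommGroup E]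
    {u : Euc n → E} {x w : Euc n} {q : ℝ} (hΩ : IsOpen Ω) (hu : ContinuousOn u Ω)
    (hx : x ∈ Ω) (hxw : infDist x (frontier Ω) = dist x w) (hq : 0 ≤ q) (μ : Measure (Euc n)) :
    (‖u x‖₊ : ℝ≥0∞) ^ q * μ (frontier Ω ∩ ball w (κ * infDist x (frontier Ω))) ≤
      ∫⁻ z, ntMax Ω κ u z ^ q ∂μ.restrict (frontier Ω) := by
  set S := frontier Ω ∩ ball w (κ * infDist x (frontier Ω))
  calc (‖u x‖₊ : ℝ≥0∞) ^ q * μ S = ∫⁻ _ in S, (‖u x‖₊ : ℝ≥0∞) ^ q ∂μ :=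
        (setLIntegral_const _ _).symm
    _ ≤ ∫⁻ z in S, ntMax Ω κ u z ^ q ∂μ :=
        setLIntegral_mono' (isClosed_frontier.measurableSet.inter measurableSet_ball)
          fun z hz => ENNReal.rpow_le_rpow
            (nnnorm_le_ntMax hΩ hu (mem_ntRegion_of_mem_ball hx hxw hz.2)) hq
    _ ≤ ∫⁻ z in frontier Ω, ntMax Ω κ u z ^ q ∂μ :=
        lintegral_mono' (Measure.restrict_mono inter_subset_left le_rfl) le_rfl

theorem nnnorm_le_of_lowerAhlfors {E : Type*} [NormedAddCommGroup E] {u : Euc n → E}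
    {x : Euc n} {μ : Measure (Euc n)} {c d q : ℝ} (hΩ : IsOpen Ω)
    (hF : (frontier Ω).Nonempty) (hc : 0 < c) (hκ : 0 < κ) (hq : 0 < q)
    (hAhl : ∀ w ∈ frontier Ω, ∀ r : ℝ, 0 < r →
      ENNReal.ofReal (c * r ^ d) ≤ μ (frontier Ω ∩ ball w r))
    (hu : ContinuousOn u Ω) (hx : x ∈ Ω) :
    (‖u x‖₊ : ℝ≥0∞) ≤
      ENNReal.ofReal ((c * κ ^ d) ^ (-(1 / q)) * infDist x (frontier Ω) ^ (-d / q)) *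
        (∫⁻ z, ntMax Ω κ u z ^ q ∂μ.restrict (frontier Ω)) ^ (1 / q) := by
  set δ := infDist x (frontier Ω)
  have hδ : 0 < δ := (isClosed_frontier.notMem_iff_infDist_pos hF).1
    fun h => hΩ.inter_frontier_eq.subset ⟨hx, h⟩
  obtain ⟨w, hw, hxw⟩ := isClosed_frontier.exists_infDist_eq_dist hF x
  have hm : 0 < c * (κ * δ) ^ d := by positivity
  calc (‖u x‖₊ : ℝ≥0∞)
      ≤ ENNReal.ofReal (c * (κ * δ) ^ d) ^ (-(1 / q)) *
          (∫⁻ z, ntMax Ω κ u z ^ q ∂μ.restrict (frontier Ω)) ^ (1 / q) :=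
        le_rpow_neg_mul_rpow_of_rpow_mul_le hq (ENNReal.ofReal_pos.2 hm).ne'
          ENNReal.ofReal_ne_top
          ((mul_le_mul_right (hAhl w hw _ (by positivity)) _).trans
            (rpow_mul_measure_le_lintegral_ntMax hΩ hu hx hxw hq.le μ))
    _ = _ := by
      rw [ENNReal.ofReal_rpow_of_pos hm, Real.mul_rpow hκ.le hδ.le, ← mul_assoc,
        Real.mul_rpow (by positivity) (by positivity), ← Real.rpow_mul hδ.le,
        show d * -(1 / q) = -d / q by ring]

end NontangentialMaximal

/-- a pointwise bound for continuous functions on an open set with unbounded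
lower Ahlfors regular boundary, in terms of the `L^q` norm of the nontangential maximal
function, with a constant depending only on `n`, `c`, `κ`, `q`. -/
theorem statement5 (n : ℕ) (hn : 2 ≤ n) (c : ℝ) (hc : 0 < c) (κ : ℝ) (hκ : 0 < κ)
    (q : ℝ) (hq : 1 ≤ q) :
    ∃ C : ℝ, 0 < C ∧
      ∀ Ω : Set (Euc n), IsOpen Ω → Ω.Nonempty → Ω ≠ univ →
        ¬ Bornology.IsBounded (frontier Ω) →
        (∀ x ∈ frontier Ω, ∀ r : ℝ, 0 < r →
          ENNReal.ofReal (c * r ^ (n - 1)) ≤ μH[(n : ℝ) - 1] (frontier Ω ∩ ball x r)) →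
        ∀ u : Euc n → ℝ, ContinuousOn u Ω → ∀ x ∈ Ω,
          (‖u x‖₊ : ℝ≥0∞) ≤
            ENNReal.ofReal (C * infDist x (frontier Ω) ^ (-((n : ℝ) - 1) / q)) *
              (∫⁻ z, (ntMax Ω κ u z) ^ q
                ∂((μH[(n : ℝ) - 1]).restrict (frontier Ω))) ^ (1 / q) := by
  refine ⟨(c * κ ^ ((n : ℝ) - 1)) ^ (-(1 / q)), by positivity, ?_⟩
  intro Ω hΩ hne hne_univ _ hAhl u hu x hx
  have hdim : ((n - 1 : ℕ) : ℝ) = (n : ℝ) - 1 := by push_cast [show 1 ≤ n by omega]; ring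
  refine nnnorm_le_of_lowerAhlfors hΩ (nonempty_frontier_iff.2 ⟨hne, hne_univ⟩) hc hκ
    (by linarith) (fun w hw r hr => ?_) hu hx
  simpa only [← hdim, Real.rpow_natCast] using hAhl w hw r hr
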